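/- Monotonicity of avalanches in the dissipation: for 0 ≤ γ' < γ and any η ∈ [0,∞)^{Z^d} that is γ'-stabilizable, the toppling numbers satisfy N^{(γ)}(η)_x ≤ N^{(γ')}(η)_x for all x; in particular the avalanche set {x : N^{(γ)}(η + δ_0)(x) ≥ 1} for dissipation γ is contained in the corresponding avalanche set for dissipation γ'. -/
import Mathlib


/-- Sites of the lattice `ℤ^d`. -/
abbrev Site (d : ℕ) := Fin d → ℤ

/-- ℓ¹ (taxicab) distance on `ℤ^d`. -/
def dist1 {d : ℕ} (x y : Site d) : ℕ := ∑ i, (x i - y i).natAbs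

/-- The unit step in direction `i`, with sign given by `b`. -/
def step {d : ℕ} (i : Fin d) (b : Bool) : Site d :=
  fun j => if j = i then (if b then 1 else -1) else 0

/-- `p d n x y` is the `n`-step transition probability of the simple random
walk on `ℤ^d` stepping to each of the `2d` nearest neighbors with
probability `1/(2d)`. -/
noncomputable def srwP (d : ℕ) : ℕ → Site d → Site d → ℝ
  | 0, x, y => if x = y then 1 else 0
  | n + 1, x, y => (1 / (2 * d)) * ∑ s : Fin d × Bool, srwP d n (x + step s.1 s.2) y


/-- Height configurations on `ℤ^d` (heights are reals). -/
abbrev Config (d : ℕ) := Site d → ℝ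

/-- The toppling matrix `Δ^{(γ)}`: `2d+γ` on the diagonal, `-1` on
nearest-neighbor pairs, `0` otherwise. -/
noncomputable def toppleMat (d : ℕ) (γ : ℝ) (x y : Site d) : ℝ :=
  if x = y then 2 * d + γ else if dist1 x y = 1 then -1 else 0

/-- Toppling site `x`: subtract the row `Δ^{(γ)}_{x,·}` from the configuration. -/
noncomputable def topple (d : ℕ) (γ : ℝ) (x : Site d) (η : Config d) : Config d :=
  fun y => η y - toppleMat d γ x y

/-- Apply a finite sequence of topplings. -/
noncomputable def applyList (d : ℕ) (γ : ℝ) : List (Site d) → Config d → Config d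
  | [], η => η
  | x :: l, η => applyList d γ l (topple d γ x η)

/-- A sequence of topplings, all at sites of `Λ`, is legal if each toppled site
is unstable (height `≥ 2d+γ`) at the moment it is toppled. -/
def legalList (d : ℕ) (γ : ℝ) (Λ : Finset (Site d)) : Config d → List (Site d) → Prop
  | _, [] => True
  | η, x :: l => x ∈ Λ ∧ 2 * d + γ ≤ η x ∧ legalList d γ Λ (topple d γ x η) l

/-- A `(Λ,γ)`-stabilizing sequence: a legal sequence of topplings in `Λ` whose
final configuration is stable (`< 2d+γ`) at every site of `Λ`. -/
def stabilizingList (d : ℕ) (γ : ℝ) (Λ : Finset (Site d)) (η : Config d)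
    (l : List (Site d)) : Prop :=
  legalList d γ Λ η l ∧ ∀ x ∈ Λ, applyList d γ l η x < 2 * d + γ

/-- Apply an optional toppling (`none` = no toppling at this time). -/
noncomputable def toppleO (d : ℕ) (γ : ℝ) (o : Option (Site d)) (η : Config d) :
    Config d :=
  match o with
  | none => η
  | some x => topple d γ x η

/-- The sequence of configurations obtained from `η` by performing the
(possibly infinite) sequence of topplings `s`. -/
noncomputable def cfgSeq (d : ℕ) (γ : ℝ) (η : Config d) (s : ℕ → Option (Site d)) :
    ℕ → Config d
  | 0 => η
  | n + 1 => toppleO d γ (s n) (cfgSeq d γ η s n)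

/-- A sequence of topplings is legal if every toppled site is unstable
(height `≥ 2d+γ`) at the moment it is toppled. -/
def legalSeq (d : ℕ) (γ : ℝ) (η : Config d) (s : ℕ → Option (Site d)) : Prop :=
  ∀ n x, s n = some x → 2 * d + γ ≤ cfgSeq d γ η s n x

/-- A sequence of topplings is exhaustive if every site that is unstable at some
time is toppled at some later time. -/
def exhaustiveSeq (d : ℕ) (γ : ℝ) (η : Config d) (s : ℕ → Option (Site d)) : Prop :=
  ∀ n x, 2 * d + γ ≤ cfgSeq d γ η s n x → ∃ m, n ≤ m ∧ s m = some x

/-- `η` is `γ`-stabilizable: in some (equivalently, any) exhaustive legal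
sequence of topplings, every site topples finitely often. -/
def Stabilizable (d : ℕ) (γ : ℝ) (η : Config d) : Prop :=
  ∃ s : ℕ → Option (Site d), legalSeq d γ η s ∧ exhaustiveSeq d γ η s ∧
    ∀ x : Site d, {m : ℕ | s m = some x}.Finite

/-- The toppling numbers `N^{(γ)}(η)_x` of an exhaustive legal sequence
(independent of the choice of sequence). -/
noncomputable def Ncount (d : ℕ) (γ : ℝ) (η : Config d) (x : Site d) : ℕ :=
  open scoped Classical in
  if h : Stabilizable d γ η then Nat.card {m : ℕ | h.choose m = some x} else 0

/-- The infinite-volume stabilization `S^{(γ)}(η) = η − Δ^{(γ)} N^{(γ)}(η)`. -/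
noncomputable def stabilizeInf (d : ℕ) (γ : ℝ) (η : Config d) : Config d :=
  fun x => η x - (2 * d + γ) * (Ncount d γ η x : ℝ) +
    ∑ s : Fin d × Bool, (Ncount d γ η (x + step s.1 s.2) : ℝ)

/-- Unit mass at the origin. -/
noncomputable def deltaZero (d : ℕ) : Config d :=
  fun y => if y = 0 then 1 else 0


/-! ### Auxiliary development -/

section Aux

open Finset

variable {d : ℕ}

lemma dist1_self (x : Site d) : dist1 x x = 0 := by simp [dist1]

lemma dist1_add_step (x : Site d) (i : Fin d) (b : Bool) :
    dist1 (x + step i b) x = 1 := by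
  unfold dist1
  have h : ∀ j, ((x + step i b) j - x j).natAbs = if j = i then 1 else 0 := by
    intro j
    simp only [Pi.add_apply, step]
    split
    · cases b <;> simp
    · simp
  rw [Finset.sum_congr rfl (fun j _ => h j)]
  simp

lemma step_inj {i i' : Fin d} {b b' : Bool} (h : step i b = step i' b') :
    i = i' ∧ b = b' := by
  have h1 := congrFun h i
  by_cases hii : i = i'
  · subst hii
    refine ⟨rfl, ?_⟩
    simp only [step, if_pos rfl] at h1
    cases b <;> cases b' <;> simp_all
  · exfalso
    simp only [step, if_pos rfl, if_neg (Ne.symm hii)] at h1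
    cases b <;> simp_all

lemma exists_step_of_dist1 {z x : Site d} (h : dist1 z x = 1) :
    ∃ i b, z = x + step i b := by
  unfold dist1 at h
  obtain ⟨i, -, hi⟩ := Finset.exists_ne_zero_of_sum_ne_zero (s := Finset.univ)
    (f := fun i => (z i - x i).natAbs) (by rw [h]; exact one_ne_zero)
  have hsplit : (z i - x i).natAbs +
      ∑ j ∈ Finset.univ.erase i, (z j - x j).natAbs = 1 := by
    rw [← h]
    exact Finset.add_sum_erase Finset.univ (fun j => (z j - x j).natAbs) (Finset.mem_univ i)
  have hione : (z i - x i).natAbs = 1 := by omega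
  have hrest : ∀ j, j ≠ i → (z j - x j).natAbs = 0 := by
    intro j hj
    have h0 : ∑ j ∈ Finset.univ.erase i, (z j - x j).natAbs = 0 := by omega
    have := Finset.sum_eq_zero_iff.1 h0 j (Finset.mem_erase.2 ⟨hj, Finset.mem_univ j⟩)
    exact this
  rcases Int.natAbs_eq_iff.1 hione with hcase | hcase
  · refine ⟨i, true, funext fun j => ?_⟩
    by_cases hj : j = i
    · subst hj; simp only [Pi.add_apply, step, if_pos rfl]; push_cast at hcase ⊢; omega
    · have := hrest j hj
      simp only [Pi.add_apply, step, if_neg hj]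
      omega
  · refine ⟨i, false, funext fun j => ?_⟩
    by_cases hj : j = i
    · subst hj; simp only [Pi.add_apply, step, if_pos rfl]; push_cast at hcase ⊢; omega
    · have := hrest j hj
      simp only [Pi.add_apply, step, if_neg hj]
      omega

lemma neighbor_count (z x : Site d) :
    (∑ t : Fin d × Bool, (if z = x + step t.1 t.2 then (1:ℝ) else 0)) =
      if dist1 z x = 1 then 1 else 0 := by
  by_cases h : dist1 z x = 1
  · obtain ⟨i, b, rfl⟩ := exists_step_of_dist1 h
    rw [if_pos h]
    have hiff : ∀ t : Fin d × Bool, (x + step i b = x + step t.1 t.2) ↔ t = (i, b) := by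
      intro t
      constructor
      · intro h'
        have hs : step t.1 t.2 = step i b := (add_right_injective x h').symm
        obtain ⟨h1, h2⟩ := step_inj hs
        exact Prod.ext h1 h2
      · rintro rfl; rfl
    calc (∑ t : Fin d × Bool, (if x + step i b = x + step t.1 t.2 then (1:ℝ) else 0))
        = ∑ t : Fin d × Bool, (if t = (i, b) then (1:ℝ) else 0) := by
          refine Finset.sum_congr rfl fun t _ => ?_
          simp [hiff t]
      _ = 1 := by rw [Finset.sum_ite_eq' Finset.univ (i, b) (fun _ => (1:ℝ))]; simp
  · rw [if_neg h]
    refine Finset.sum_eq_zero fun t _ => ?_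
    rw [if_neg]
    intro heq
    exact h (heq ▸ dist1_add_step x t.1 t.2)

lemma toppleMat_eq (γ : ℝ) (z x : Site d) :
    toppleMat d γ z x = (if z = x then (2*d+γ) else 0)
      - ∑ t : Fin d × Bool, (if z = x + step t.1 t.2 then (1:ℝ) else 0) := by
  rw [neighbor_count]
  unfold toppleMat
  by_cases h : z = x
  · subst h
    rw [if_pos rfl, if_pos rfl, if_neg (by rw [dist1_self]; omega)]
    ring
  · rw [if_neg h, if_neg h]
    by_cases h1 : dist1 z x = 1 <;> simp [h1]

lemma toppleMat_nonpos {γ : ℝ} {z x : Site d} (h : z ≠ x) : toppleMat d γ z x ≤ 0 := by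
  unfold toppleMat
  rw [if_neg h]
  split <;> norm_num

/-- Number of topplings at `y` among the first `n` steps of `s`. -/
def cnt (s : ℕ → Option (Site d)) (n : ℕ) (y : Site d) : ℕ :=
  ∑ m ∈ Finset.range n, if s m = some y then 1 else 0

lemma cnt_eq_filter (s : ℕ → Option (Site d)) (n : ℕ) (y : Site d) :
    cnt s n y = ((Finset.range n).filter (fun m => s m = some y)).card :=
  (Finset.card_filter _ _).symm

lemma cnt_mono (s : ℕ → Option (Site d)) {n m : ℕ} (h : n ≤ m) (y : Site d) :
    cnt s n y ≤ cnt s m y :=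
  Finset.sum_le_sum_of_subset (Finset.range_subset_range.2 h)

lemma cfg_formula (γ : ℝ) (η : Config d) (s : ℕ → Option (Site d)) (n : ℕ) (x : Site d) :
    cfgSeq d γ η s n x = η x - (2*d+γ) * (cnt s n x : ℝ)
      + ∑ t : Fin d × Bool, (cnt s n (x + step t.1 t.2) : ℝ) := by
  induction n with
  | zero => simp [cfgSeq, cnt]
  | succ n ih =>
    show toppleO d γ (s n) (cfgSeq d γ η s n) x = _
    cases hs : s n with
    | none =>
      have hc : ∀ y, cnt s (n+1) y = cnt s n y := by
        intro y
        rw [cnt, Finset.sum_range_succ, hs]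
        simp [cnt]
      simp only [toppleO, hc]
      exact ih
    | some z =>
      have hc : ∀ y, (cnt s (n+1) y : ℝ) = (cnt s n y : ℝ) + if z = y then 1 else 0 := by
        intro y
        rw [cnt, Finset.sum_range_succ, hs]
        push_cast [cnt]
        congr 1
        by_cases h : z = y <;> simp [h]
      show (topple d γ z (cfgSeq d γ η s n)) x = _
      show cfgSeq d γ η s n x - toppleMat d γ z x = _
      rw [ih, toppleMat_eq]
      simp only [hc]
      rw [Finset.sum_add_distrib]
      by_cases hzx : z = x
      · simp only [if_pos hzx]; ring
      · simp only [if_neg hzx]; ring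

lemma cfg_mono {γ γ' : ℝ} (h : γ' ≤ γ) (η : Config d) (s : ℕ → Option (Site d))
    (n : ℕ) (x : Site d) :
    cfgSeq d γ η s n x ≤ cfgSeq d γ' η s n x := by
  rw [cfg_formula, cfg_formula]
  have h0 : (0:ℝ) ≤ (cnt s n x : ℝ) := Nat.cast_nonneg _
  nlinarith

lemma legal_mono {γ γ' : ℝ} (h : γ' ≤ γ) {η : Config d} {s : ℕ → Option (Site d)}
    (hl : legalSeq d γ η s) : legalSeq d γ' η s := by
  intro n x hx
  have := hl n x hx
  have := cfg_mono h η s n x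
  linarith

lemma card_eq_finite (s : ℕ → Option (Site d)) (x : Site d)
    (h : {m : ℕ | s m = some x}.Finite) :
    Nat.card {m : ℕ | s m = some x} = h.toFinset.card := by
  rw [Nat.card_coe_set_eq, Set.ncard_eq_toFinset_card _ h]

lemma cnt_le_card (s : ℕ → Option (Site d)) (x : Site d)
    (h : {m : ℕ | s m = some x}.Finite) (n : ℕ) :
    cnt s n x ≤ Nat.card {m : ℕ | s m = some x} := by
  rw [card_eq_finite s x h, cnt_eq_filter]
  apply Finset.card_le_card
  intro m hm
  rw [Finset.mem_filter] at hm
  rw [Set.Finite.mem_toFinset]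
  exact hm.2

lemma cnt_eq_card_of_large (s : ℕ → Option (Site d)) (x : Site d)
    (h : {m : ℕ | s m = some x}.Finite) :
    ∃ N, ∀ n, N ≤ n → cnt s n x = Nat.card {m : ℕ | s m = some x} := by
  refine ⟨h.toFinset.sup id + 1, fun n hn => ?_⟩
  rw [card_eq_finite s x h, cnt_eq_filter]
  congr 1
  ext m
  rw [Finset.mem_filter, Finset.mem_range, Set.Finite.mem_toFinset]
  constructor
  · exact fun hm => hm.2
  · intro hm
    refine ⟨?_, hm⟩
    have : m ≤ h.toFinset.sup id := Finset.le_sup (f := id) (Set.Finite.mem_toFinset h |>.2 hm)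
    omega

lemma limit_stable (γ : ℝ) (η : Config d) (σ : ℕ → Option (Site d))
    (hex : exhaustiveSeq d γ η σ) (hfin : ∀ x, {m : ℕ | σ m = some x}.Finite)
    (x : Site d) :
    η x - (2*d+γ) * (Nat.card {m : ℕ | σ m = some x} : ℝ)
      + ∑ t : Fin d × Bool, (Nat.card {m : ℕ | σ m = some (x + step t.1 t.2)} : ℝ)
      < 2*d+γ := by
  choose N hN using fun y => cnt_eq_card_of_large σ y (hfin y)
  set n₀ := max (N x) (Finset.univ.sup (fun t : Fin d × Bool => N (x + step t.1 t.2))) with hn₀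
  have hx0 : cnt σ n₀ x = Nat.card {m : ℕ | σ m = some x} := hN x n₀ (le_max_left _ _)
  have hnb : ∀ t : Fin d × Bool,
      cnt σ n₀ (x + step t.1 t.2) = Nat.card {m : ℕ | σ m = some (x + step t.1 t.2)} := by
    intro t
    refine hN _ n₀ (le_trans ?_ (le_max_right _ _))
    exact Finset.le_sup (f := fun t : Fin d × Bool => N (x + step t.1 t.2)) (Finset.mem_univ t)
  by_contra hcon
  push_neg at hcon
  have hcfg : 2*d+γ ≤ cfgSeq d γ η σ n₀ x := by
    rw [cfg_formula, hx0]
    calc (2*(d:ℝ)+γ) ≤ _ := hcon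
    _ = _ := by
      congr 1
      exact Finset.sum_congr rfl fun t _ => by rw [hnb t]
  obtain ⟨m, hm, hσm⟩ := hex n₀ x hcfg
  have h1 : cnt σ (m+1) x = cnt σ m x + 1 := by
    rw [cnt, Finset.sum_range_succ, hσm, if_pos rfl, cnt]
  have h2 := cnt_mono σ hm x
  have h3 := cnt_le_card σ x (hfin x) (m+1)
  omega

/-- Least action principle: any legal sequence topples each site at most as
often as a legal exhaustive finite (stabilizing) sequence. -/
lemma least_action (γ : ℝ) (η : Config d) (σ : ℕ → Option (Site d))
    (hex : exhaustiveSeq d γ η σ) (hfin : ∀ x, {m : ℕ | σ m = some x}.Finite)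
    (τ : ℕ → Option (Site d)) (hτ : legalSeq d γ η τ) :
    ∀ n x, cnt τ n x ≤ Nat.card {m : ℕ | σ m = some x} := by
  intro n
  induction n with
  | zero => intro x; simp [cnt]
  | succ n ih =>
    intro x
    cases hs : τ n with
    | none =>
      rw [cnt, Finset.sum_range_succ, hs]
      simpa [cnt] using ih x
    | some z =>
      by_cases hzx : z = x
      · subst hzx
        rw [cnt, Finset.sum_range_succ, hs, if_pos rfl]
        by_contra hcon
        push_neg at hcon
        have heq : cnt τ n z = Nat.card {m : ℕ | σ m = some z} := by
          have := ih z
          rw [cnt] at this ⊢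
          omega
        have hle := hτ n z hs
        rw [cfg_formula, heq] at hle
        have hsum : ∑ t : Fin d × Bool, (cnt τ n (z + step t.1 t.2) : ℝ)
            ≤ ∑ t : Fin d × Bool,
              (Nat.card {m : ℕ | σ m = some (z + step t.1 t.2)} : ℝ) :=
          Finset.sum_le_sum fun t _ => Nat.cast_le.2 (ih _)
        have hst := limit_stable γ η σ hex hfin z
        linarith
      · rw [cnt, Finset.sum_range_succ, hs, if_neg (by simpa using hzx)]
        simpa [cnt] using ih x

lemma finite_of_cnt_bounded {s : ℕ → Option (Site d)} {x : Site d} {K : ℕ}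
    (h : ∀ n, cnt s n x ≤ K) : {m : ℕ | s m = some x}.Finite := by
  by_contra hinf
  have hinf2 : Set.Infinite {m : ℕ | s m = some x} := hinf
  obtain ⟨t, hts, htc⟩ := hinf2.exists_subset_card_eq (K+1)
  have hsub : t ⊆ (Finset.range (t.sup id + 1)).filter (fun m => s m = some x) := by
    intro m hm
    rw [Finset.mem_filter, Finset.mem_range]
    refine ⟨Nat.lt_succ_of_le (Finset.le_sup (f := id) hm), hts hm⟩
  have hcard := Finset.card_le_card hsub
  rw [htc, ← cnt_eq_filter] at hcard
  have := h (t.sup id + 1)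
  omega

/-- A sequence hitting every site infinitely often. -/
lemma exists_enum (d : ℕ) : ∃ e : ℕ → Site d, ∀ x n, ∃ m, n ≤ m ∧ e m = x := by
  obtain ⟨f, hf⟩ := exists_surjective_nat (Site d)
  refine ⟨fun n => f (Nat.unpair n).1, fun x n => ?_⟩
  obtain ⟨k, rfl⟩ := hf x
  exact ⟨Nat.pair k n, Nat.right_le_pair k n, by simp⟩

/-- Greedy construction of configurations for an exhaustive legal sequence. -/
noncomputable def greedyCfg (d : ℕ) (γ : ℝ) (η : Config d) (e : ℕ → Site d) :
    ℕ → Config d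
  | 0 => η
  | n + 1 =>
    open scoped Classical in
    if 2*d+γ ≤ greedyCfg d γ η e n (e n) then topple d γ (e n) (greedyCfg d γ η e n)
    else greedyCfg d γ η e n

noncomputable def greedySeq (d : ℕ) (γ : ℝ) (η : Config d) (e : ℕ → Site d)
    (n : ℕ) : Option (Site d) :=
  open scoped Classical in
  if 2*d+γ ≤ greedyCfg d γ η e n (e n) then some (e n) else none

open scoped Classical in
lemma greedyCfg_succ (γ : ℝ) (η : Config d) (e : ℕ → Site d) (n : ℕ) :
    greedyCfg d γ η e (n+1) =
      if 2*d+γ ≤ greedyCfg d γ η e n (e n) then topple d γ (e n) (greedyCfg d γ η e n)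
      else greedyCfg d γ η e n := rfl

lemma greedy_cfgSeq (γ : ℝ) (η : Config d) (e : ℕ → Site d) (n : ℕ) :
    cfgSeq d γ η (greedySeq d γ η e) n = greedyCfg d γ η e n := by
  induction n with
  | zero => rfl
  | succ n ih =>
    show toppleO d γ (greedySeq d γ η e n) _ = _
    rw [ih, greedyCfg_succ]
    unfold greedySeq
    by_cases h : 2*d+γ ≤ greedyCfg d γ η e n (e n)
    · rw [if_pos h, if_pos h]; rfl
    · rw [if_neg h, if_neg h]; rfl

lemma greedy_legal (γ : ℝ) (η : Config d) (e : ℕ → Site d) :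
    legalSeq d γ η (greedySeq d γ η e) := by
  intro n x hx
  unfold greedySeq at hx
  by_cases h : 2*d+γ ≤ greedyCfg d γ η e n (e n)
  · rw [if_pos h] at hx
    rw [greedy_cfgSeq]
    rw [Option.some_inj] at hx
    rwa [← hx]
  · rw [if_neg h] at hx; exact absurd hx (by simp)

lemma greedy_exhaustive (γ : ℝ) (η : Config d) (e : ℕ → Site d)
    (he : ∀ x n, ∃ m, n ≤ m ∧ e m = x) :
    exhaustiveSeq d γ η (greedySeq d γ η e) := by
  intro n x hx
  rw [greedy_cfgSeq] at hx
  by_contra hcon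
  push_neg at hcon
  have hstay : ∀ k, n ≤ k → 2*d+γ ≤ greedyCfg d γ η e k x := by
    intro k hk
    induction k, hk using Nat.le_induction with
    | base => exact hx
    | succ k hk ihk =>
      rw [greedyCfg_succ]
      by_cases h : 2*d+γ ≤ greedyCfg d γ η e k (e k)
      · rw [if_pos h]
        have hne : e k ≠ x := by
          intro heq
          exact hcon k hk (by unfold greedySeq; rw [if_pos h, heq])
        show 2*d+γ ≤ greedyCfg d γ η e k x - toppleMat d γ (e k) x
        have := toppleMat_nonpos (γ := γ) hne
        linarith
      · rw [if_neg h]; exact ihk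
  obtain ⟨m, hm, hem⟩ := he x n
  apply hcon m hm
  unfold greedySeq
  rw [hem, if_pos (hstay m hm)]

/-- Main lemma: monotonicity of stabilizability and toppling numbers in `γ`. -/
lemma main_mono (d : ℕ) (γ γ' : ℝ) (hlt : γ' ≤ γ) (η : Config d)
    (h' : Stabilizable d γ' η) :
    Stabilizable d γ η ∧ ∀ x : Site d, Ncount d γ η x ≤ Ncount d γ' η x := by
  obtain ⟨hleg', hex', hfin'⟩ := h'.choose_spec
  obtain ⟨e, he⟩ := exists_enum d
  set s := greedySeq d γ η e with hs
  have hsleg : legalSeq d γ η s := greedy_legal γ η e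
  have hsex : exhaustiveSeq d γ η s := greedy_exhaustive γ η e he
  have hsleg' : legalSeq d γ' η s := legal_mono hlt hsleg
  have hsfin : ∀ x, {m : ℕ | s m = some x}.Finite := fun x =>
    finite_of_cnt_bounded (fun n => least_action γ' η _ hex' hfin' s hsleg' n x)
  have hstab : Stabilizable d γ η := ⟨s, hsleg, hsex, hsfin⟩
  refine ⟨hstab, fun x => ?_⟩
  have hN : Ncount d γ η x = Nat.card {m : ℕ | hstab.choose m = some x} := by
    unfold Ncount
    rw [dif_pos hstab]
  have hN' : Ncount d γ' η x = Nat.card {m : ℕ | h'.choose m = some x} := by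
    unfold Ncount
    rw [dif_pos h']
  rw [hN, hN']
  obtain ⟨hlegg, hexg, hfing⟩ := hstab.choose_spec
  have h1 : legalSeq d γ' η hstab.choose := legal_mono hlt hlegg
  obtain ⟨N, hNN⟩ := cnt_eq_card_of_large hstab.choose x (hfing x)
  rw [← hNN N le_rfl]
  exact least_action γ' η _ hex' hfin' _ h1 N x

end Aux

/-- Monotonicity of toppling numbers in the dissipation: for `0 ≤ γ' < γ`, any
`γ'`-stabilizable `η` is `γ`-stabilizable with `N^{(γ)}(η) ≤ N^{(γ')}(η)`
pointwise; in particular the avalanche set of `η + δ₀` for dissipation `γ` is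
contained in the one for dissipation `γ'`. -/
theorem toppling_numbers_monotone_in_dissipation (d : ℕ) (hd : 0 < d)
    (γ γ' : ℝ) (h0 : 0 ≤ γ') (hlt : γ' < γ)
    (η : Config d) (hη : ∀ z, 0 ≤ η z) :
    (Stabilizable d γ' η →
      Stabilizable d γ η ∧ ∀ x : Site d, Ncount d γ η x ≤ Ncount d γ' η x) ∧
    (Stabilizable d γ' (η + deltaZero d) →
      {x : Site d | 1 ≤ Ncount d γ (η + deltaZero d) x} ⊆
        {x : Site d | 1 ≤ Ncount d γ' (η + deltaZero d) x}) := by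
  constructor
  · intro h'
    exact main_mono d γ γ' hlt.le η h'
  · intro h' x hx
    have hx1 : 1 ≤ Ncount d γ (η + deltaZero d) x := hx
    have := (main_mono d γ γ' hlt.le _ h').2 x
    exact le_trans hx1 this
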